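/- Let A be a unital commutative C*-algebra and V a finite free A-module with a non-degenerate Hermitian sesquilinear form. If (e_i) and (e'_i) are two bases with Gram determinants g and g' respectively, and both determinants are invertible, then |g'|·g'⁻¹ = |g|·g⁻¹. That is, the signature ν = |g|/g is independent of the choice of basis. -/

import Mathlib

/-!
If `P` is the change-of-basis matrix, the Gram matrices are related by `G' = P G Pᴴ`, so
`g' = p g` with `p = star (det P) * det P`, which is positive and invertible. In a commutative
C*-algebra `p |g|` is then a positive square root of `g'²`, hence equals `|g'|`, and `p` cancels
in `|g'| g'⁻¹ = p |g| (p g)⁻¹`.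
-/

open Matrix

section Gram

variable {R V ι κ : Type*} [Fintype ι] {inner : V → V → R}

def gramMatrix (inner : V → V → R) (v : κ → V) : Matrix κ κ R :=
  Matrix.of fun i j => inner (v i) (v j)

lemma inner_sum_smul_left [Semiring R] [AddCommMonoid V] [Module R V]
    (hlin : ∀ x : V, IsLinearMap R fun y => inner y x) (c : ι → R) (w : ι → V) (x : V) :
    inner (∑ i, c i • w i) x = ∑ i, c i * inner (w i) x := by
  have := map_sum (IsLinearMap.mk' _ (hlin x)) (fun i => c i • w i) Finset.univ
  simpa only [IsLinearMap.mk'_apply, (hlin x).map_smul, smul_eq_mul] using this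

lemma inner_sum_smul_right [CommSemiring R] [StarRing R] [AddCommMonoid V] [Module R V]
    (hlin : ∀ x : V, IsLinearMap R fun y => inner y x)
    (hsymm : ∀ x y : V, inner y x = star (inner x y)) (c : ι → R) (w : ι → V) (x : V) :
    inner x (∑ i, c i • w i) = ∑ i, star (c i) * inner x (w i) := by
  rw [hsymm _ x, inner_sum_smul_left hlin, star_sum]
  simp only [star_mul', ← hsymm]

lemma gramMatrix_sum_smul [CommSemiring R] [StarRing R] [AddCommMonoid V] [Module R V]
    (hlin : ∀ x : V, IsLinearMap R fun y => inner y x)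
    (hsymm : ∀ x y : V, inner y x = star (inner x y)) (P : Matrix κ ι R) (w : ι → V) :
    gramMatrix inner (fun k => ∑ i, P k i • w i) = P * gramMatrix inner w * Pᴴ := by
  ext k l
  simp only [gramMatrix, of_apply, mul_apply, conjTranspose_apply, inner_sum_smul_left hlin,
    inner_sum_smul_right hlin hsymm, Finset.mul_sum, Finset.sum_mul]
  rw [Finset.sum_comm]
  refine Finset.sum_congr rfl fun j _ => Finset.sum_congr rfl fun i _ => ?_
  ring

lemma det_gramMatrix_eq_star_det_mul_det_mul [CommRing R] [StarRing R] [AddCommGroup V]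
    [Module R V] [DecidableEq ι] (hlin : ∀ x : V, IsLinearMap R fun y => inner y x)
    (hsymm : ∀ x y : V, inner y x = star (inner x y)) (b : Module.Basis ι R V) (v : ι → V) :
    (gramMatrix inner v).det = star (b.det v) * b.det v * (gramMatrix inner b).det := by
  have hv : gramMatrix inner v = (b.toMatrix v)ᵀ * gramMatrix inner b * (b.toMatrix v)ᵀᴴ := by
    rw [← gramMatrix_sum_smul hlin hsymm]
    congr with k
    exact (b.sum_repr (v k)).symm
  rw [hv, det_mul, det_mul, det_conjTranspose, det_transpose, b.det_apply]
  ring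

end Gram

lemma Ring.mul_mul_inverse_mul_cancel_left {R : Type*} [CommSemiring R] {u : R} (hu : IsUnit u)
    (a b : R) : u * a * Ring.inverse (u * b) = a * Ring.inverse b := by
  rw [Ring.mul_inverse_rev,
    show u * a * (Ring.inverse b * Ring.inverse u) = a * Ring.inverse b * (u * Ring.inverse u) by
      ring, Ring.mul_inverse_cancel u hu, mul_one]

theorem signature_independent_of_basis_general {A : Type*} [CommCStarAlgebra A]
    [PartialOrder A] [StarOrderedRing A]
    {ι : Type*} [Fintype ι] [DecidableEq ι]
    {V : Type*} [AddCommGroup V] [Module A V]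
    (inner : V → V → A)
    (hlin : ∀ x : V, IsLinearMap A fun y => inner y x)
    (hsymm : ∀ x y : V, inner y x = star (inner x y))
    (b b' : Module.Basis ι A V) (g g' : A)
    (hg : g = Matrix.det (Matrix.of fun i j => inner (b i) (b j)))
    (hg' : g' = Matrix.det (Matrix.of fun i j => inner (b' i) (b' j)))
    (m m' : A) (hm : 0 ≤ m) (hm2 : m ^ 2 = g ^ 2)
    (hm' : 0 ≤ m') (hm2' : m' ^ 2 = g' ^ 2) :
    m' * Ring.inverse g' = m * Ring.inverse g := by
  set d := b.det b'
  have hpu : IsUnit (star d * d) := (b.isUnit_det b').star.mul (b.isUnit_det b')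
  have hg'g : g' = star d * d * g :=
    hg' ▸ hg ▸ det_gramMatrix_eq_star_det_mul_det_mul hlin hsymm b b'
  have hm'm : m' = star d * d * m := by
    have hpm : star d * d * m = star d * m * d := by ring
    rw [hpm, ← CFC.sq_eq_sq_iff m' _ hm' (star_left_conjugate_nonneg hm d), hm2', hg'g]
    linear_combination -(star d * d) ^ 2 * hm2
  rw [hm'm, hg'g, Ring.mul_mul_inverse_mul_cancel_left hpu]

/-- The signature `ν = |g|/g` of a non-degenerate Hermitian sesquilinear form
on a finite free module over a commutative unital C*-algebra does not depend
on the choice of basis: if `g`, `g'` are the (invertible) Gram determinants of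
two bases and `m = |g|`, `m' = |g'|` are the positive square roots of `g²`,
`g'²`, then `|g'|·g'⁻¹ = |g|·g⁻¹`. -/
theorem signature_independent_of_basis {A : Type*} [CommCStarAlgebra A]
    [PartialOrder A] [StarOrderedRing A]
    {ι : Type*} [Fintype ι] [DecidableEq ι]
    {V : Type*} [AddCommGroup V] [Module A V]
    (inner : V → V → A)
    (hlin : ∀ x : V, IsLinearMap A fun y => inner y x)
    (hsymm : ∀ x y : V, inner y x = star (inner x y))
    (b b' : Module.Basis ι A V) (g g' : A)
    (hg : g = Matrix.det (Matrix.of fun i j => inner (b i) (b j)))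
    (hg' : g' = Matrix.det (Matrix.of fun i j => inner (b' i) (b' j)))
    (hgu : IsUnit g) (hgu' : IsUnit g')
    (m m' : A) (hm : 0 ≤ m) (hm2 : m ^ 2 = g ^ 2)
    (hm' : 0 ≤ m') (hm2' : m' ^ 2 = g' ^ 2) :
    m' * Ring.inverse g' = m * Ring.inverse g :=
  signature_independent_of_basis_general inner hlin hsymm b b' g g' hg hg' m m' hm hm2 hm' hm2'
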